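/- Let T be a binary decision tree over ℝ^d with classes {1,…,c}. Let (X, λ_X) and (X̃, λ_X̃) be finite labeled datasets in ℝ^d with class labels in {1,…,c}, let γ be a positive natural number and ε ≥ 0, and let r : X → X̃ be a map such that ‖x − r(x)‖_∞ ≤ ε and λ_X(x) = λ_X̃(r(x)) for all x ∈ X, and such that every fiber of r has cardinality exactly γ. Assume that for every x̃ ∈ X̃ the margin of x̃ at T is strictly greater than ε. Then for every leaf ℓ of T and every class k ∈ {1,…,c}: the number N_ℓ of points of X whose evaluation path through T ends at ℓ equals γ times the corresponding number Ñ_ℓ for X̃, and the number N_{ℓ,k} of such points of X with label k equals γ times the corresponding number Ñ_{ℓ,k} for X̃. -/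

import Mathlib

open scoped Classical

/-- A binary decision tree over `ℝ^d` with classes `{1,…,c}` (encoded as `Fin c`):
either a leaf labeled by a class, or an internal node carrying a feature index,
a threshold, and two subtrees. -/
inductive DTree (d c : ℕ) : Type where
  | leaf (k : Fin c) : DTree d c
  | node (j : Fin d) (t : ℝ) (L R : DTree d c) : DTree d c

namespace DTree

variable {d c : ℕ}

/-- Evaluation of a decision tree at a point `x : ℝ^d`. -/
noncomputable def eval : DTree d c → (Fin d → ℝ) → Fin c
  | leaf k, _ => k
  | node j t L R, x => if x j < t then L.eval x else R.eval x

/-- The path of `x` through the tree: the sequence of internal nodes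
(feature index, threshold) visited during evaluation. -/
noncomputable def path : DTree d c → (Fin d → ℝ) → List (Fin d × ℝ)
  | leaf _, _ => []
  | node j t L R, x => (j, t) :: (if x j < t then L.path x else R.path x)

/-- The position (sequence of left/right choices) of the leaf reached by `x`. -/
noncomputable def leafPos : DTree d c → (Fin d → ℝ) → List Bool
  | leaf _, _ => []
  | node j t L R, x =>
      if x j < t then false :: L.leafPos x else true :: R.leafPos x

/-- The margin of `x̃` at the tree: the minimum of `|t - x̃ j|` over internal
nodes `(j, t)` on the path of `x̃`, and `+∞` for a single leaf. -/
noncomputable def margin : DTree d c → (Fin d → ℝ) → EReal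
  | leaf _, _ => ⊤
  | node j t L R, x =>
      min (↑|t - x j|) (if x j < t then L.margin x else R.margin x)

/-- The set of leaves of the tree, identified with root-to-leaf positions. -/
def leaves : DTree d c → Finset (List Bool)
  | leaf _ => {[]}
  | node _ _ L R => (L.leaves.image (false :: ·)) ∪ (R.leaves.image (true :: ·))

/-- The class label of the leaf at a given root-to-leaf position, if it exists. -/
def labelAt : DTree d c → List Bool → Option (Fin c)
  | leaf k, [] => some k
  | node _ _ L _, false :: p => L.labelAt p
  | node _ _ _ R, true :: p => R.labelAt p
  | _, _ => none

end DTree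

/-
A point within `ε` (in the sup norm) of a point whose margin exceeds `ε` takes the same branch
at every node on that point's path, so it reaches the same leaf. Hence every `x ∈ X` lands in
the leaf of its representative `r x`, and counting the points of `X` in a leaf fibre by fibre
over `X'` gives `γ` times the count for `X'`; labels are preserved by `r`, so the same holds
class by class.
-/

open Finset

theorem lt_iff_lt_of_abs_sub_le_of_lt_abs_sub {a b t ε : ℝ} (hab : |a - b| ≤ ε)
    (hbt : ε < |t - b|) : a < t ↔ b < t := by
  obtain ⟨hab₁, hab₂⟩ := abs_le.1 hab
  constructor <;> intro h <;> by_contra h' <;> rcases lt_abs.1 hbt with hbt | hbt <;> linarith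

theorem DTree.leafPos_eq_of_norm_sub_le_of_lt_margin {d c : ℕ} (T : DTree d c)
    {x x' : Fin d → ℝ} {ε : ℝ} (hclose : ‖x - x'‖ ≤ ε) (hmargin : (ε : EReal) < T.margin x') :
    T.leafPos x = T.leafPos x' := by
  induction T with
  | leaf k => rfl
  | node j t L R ihL ihR =>
    simp only [DTree.margin, lt_min_iff] at hmargin
    obtain ⟨hroot, hsub⟩ := hmargin
    have hcoord : |x j - x' j| ≤ ε := by
      simpa only [Pi.sub_apply, Real.norm_eq_abs] using (norm_le_pi_norm (x - x') j).trans hclose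
    have hside : x j < t ↔ x' j < t :=
      lt_iff_lt_of_abs_sub_le_of_lt_abs_sub hcoord (mod_cast hroot)
    by_cases h : x' j < t
    · simp only [h, if_true] at hsub
      simp only [DTree.leafPos, h, hside.2 h, if_true, ihL hsub]
    · simp only [h, if_false] at hsub
      simp only [DTree.leafPos, h, mt hside.1 h, if_false, ihR hsub]

theorem Finset.card_eq_mul_card_of_card_fiber_eq {α β : Type*} [DecidableEq β]
    {s : Finset α} {t : Finset β} {f : α → β} {n : ℕ} (hf : (s : Set α).MapsTo f t)
    (hfib : ∀ b ∈ t, #{a ∈ s | f a = b} = n) : #s = n * #t := by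
  rw [card_eq_sum_card_fiberwise hf, sum_congr rfl hfib, sum_const, smul_eq_mul, mul_comm]

theorem Finset.card_filter_eq_mul_card_filter_of_card_fiber_eq {α β : Type*} [DecidableEq β]
    {s : Finset α} {t : Finset β} {f : α → β} {n : ℕ} (hf : ∀ a ∈ s, f a ∈ t)
    (hfib : ∀ b ∈ t, #{a ∈ s | f a = b} = n) {P : α → Prop} {Q : β → Prop}
    [DecidablePred P] [DecidablePred Q] (hPQ : ∀ a ∈ s, P a ↔ Q (f a)) :
    #{a ∈ s | P a} = n * #{b ∈ t | Q b} := by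
  refine card_eq_mul_card_of_card_fiber_eq (f := f) (fun a ha => ?_) (fun b hb => ?_)
  · obtain ⟨ha, hP⟩ := mem_filter.1 ha
    exact mem_filter.2 ⟨hf a ha, (hPQ a ha).1 hP⟩
  · obtain ⟨hb, hQ⟩ := mem_filter.1 hb
    rw [filter_filter, ← hfib b hb]
    congr 1
    exact filter_congr fun a ha => ⟨And.right, fun hab => ⟨(hPQ a ha).2 (hab ▸ hQ), hab⟩⟩

theorem DTree.leaf_counts_of_balanced_representative_general {d c : ℕ} (T : DTree d c)
    (X X' : Finset (Fin d → ℝ)) (labX labX' : (Fin d → ℝ) → Fin c)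
    (γ : ℕ) (ε : ℝ)
    (r : (Fin d → ℝ) → (Fin d → ℝ)) (hr : ∀ x ∈ X, r x ∈ X')
    (hclose : ∀ x ∈ X, ‖x - r x‖ ≤ ε)
    (hlab : ∀ x ∈ X, labX x = labX' (r x))
    (hfib : ∀ x' ∈ X', (X.filter (fun x => r x = x')).card = γ)
    (hmargin : ∀ x' ∈ X', (ε : EReal) < T.margin x') :
    ∀ ℓ ∈ T.leaves, ∀ k : Fin c,
      (X.filter (fun x => T.leafPos x = ℓ)).card
          = γ * (X'.filter (fun x => T.leafPos x = ℓ)).card ∧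
        (X.filter (fun x => T.leafPos x = ℓ ∧ labX x = k)).card
          = γ * (X'.filter (fun x => T.leafPos x = ℓ ∧ labX' x = k)).card := by
  intro ℓ _ k
  have hleaf : ∀ x ∈ X, T.leafPos x = T.leafPos (r x) := fun x hx =>
    T.leafPos_eq_of_norm_sub_le_of_lt_margin (hclose x hx) (hmargin (r x) (hr x hx))
  exact ⟨card_filter_eq_mul_card_filter_of_card_fiber_eq hr hfib fun x hx => by
      rw [hleaf x hx],
    card_filter_eq_mul_card_filter_of_card_fiber_eq hr hfib fun x hx => by
      rw [hleaf x hx, hlab x hx]⟩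

/-- Let `(X, labX)` and `(X', labX')` be finite labeled datasets in `ℝ^d`, let
`r` map each `x ∈ X` to a representative `r x ∈ X'` with `‖x − r x‖_∞ ≤ ε` and
the same label, with all fibers of `r` of cardinality exactly `γ > 0`. If the
margin of every `x' ∈ X'` at the tree `T` exceeds `ε`, then for every leaf `ℓ`
of `T` and every class `k`, the number of points of `X` whose evaluation path
ends at `ℓ` is `γ` times the corresponding number for `X'`, and likewise for
the number of such points with label `k`. -/
theorem DTree.leaf_counts_of_balanced_representative {d c : ℕ} (T : DTree d c)
    (X X' : Finset (Fin d → ℝ)) (labX labX' : (Fin d → ℝ) → Fin c)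
    (γ : ℕ) (hγ : 0 < γ) (ε : ℝ) (hε : 0 ≤ ε)
    (r : (Fin d → ℝ) → (Fin d → ℝ)) (hr : ∀ x ∈ X, r x ∈ X')
    (hclose : ∀ x ∈ X, ‖x - r x‖ ≤ ε)
    (hlab : ∀ x ∈ X, labX x = labX' (r x))
    (hfib : ∀ x' ∈ X', (X.filter (fun x => r x = x')).card = γ)
    (hmargin : ∀ x' ∈ X', (ε : EReal) < T.margin x') :
    ∀ ℓ ∈ T.leaves, ∀ k : Fin c,
      (X.filter (fun x => T.leafPos x = ℓ)).card
          = γ * (X'.filter (fun x => T.leafPos x = ℓ)).card ∧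
        (X.filter (fun x => T.leafPos x = ℓ ∧ labX x = k)).card
          = γ * (X'.filter (fun x => T.leafPos x = ℓ ∧ labX' x = k)).card :=
  DTree.leaf_counts_of_balanced_representative_general T X X' labX labX' γ ε r hr hclose hlab hfib
    hmargin
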